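/- Let μ > 0, F ∈ ℝ³, and 0 < a < b. Let u_δ(x) = (1/(8πμ))·(F/|x| + ((x·F)/|x|³)·x) and p_δ(x) = (1/(4π))·(x·F)/|x|³ be the 3D Stokeslet, and let χ̃(x) = χ(|x|) with χ(r) = (2r³ − 3(a+b)r² + 6abr + b²(b−3a))/(b−a)³ for a ≤ r ≤ b. Then for every x ∈ ℝ³ with a < |x| < b, writing r = |x|: −μ·Δ(χ̃·u_δ)(x) + ∇(χ̃·p_δ)(x) = [3 / (4π(b−a)³ r²)] · ( [ (a+b)r − 2r² ]·F + [ 2ab − (a+b)r ]·((x·F)/r²)·x ). -/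

import Mathlib

open Real MeasureTheory

noncomputable section

/-- Euclidean inner product on `Fin d → ℝ`. -/
def dot {d : ℕ} (x y : Fin d → ℝ) : ℝ := ∑ i, x i * y i

/-- Euclidean norm on `Fin d → ℝ`. -/
def eunorm {d : ℕ} (x : Fin d → ℝ) : ℝ := Real.sqrt (∑ i, (x i) ^ 2)

/-- `i`-th partial derivative of a scalar field. -/
def pd {d : ℕ} (i : Fin d) (f : (Fin d → ℝ) → ℝ) (x : Fin d → ℝ) : ℝ :=
  fderiv ℝ f x (Pi.single i 1)

/-- Laplacian (sum of second partial derivatives) of a scalar field. -/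
def lap {d : ℕ} (f : (Fin d → ℝ) → ℝ) (x : Fin d → ℝ) : ℝ :=
  ∑ i, pd i (fun y => pd i f y) x

/-- Divergence of a vector field. -/
def divg {d : ℕ} (u : (Fin d → ℝ) → (Fin d → ℝ)) (x : Fin d → ℝ) : ℝ :=
  ∑ i, pd i (fun y => u y i) x

/-- 3D Stokeslet velocity. -/
def udelta3 (μ : ℝ) (F : Fin 3 → ℝ) (x : Fin 3 → ℝ) : Fin 3 → ℝ :=
  fun j => (1 / (8 * π * μ)) *
    (F j / eunorm x + (dot x F / (eunorm x) ^ 3) * x j)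

/-- 3D Stokeslet pressure. -/
def pdelta3 (F : Fin 3 → ℝ) (x : Fin 3 → ℝ) : ℝ :=
  (1 / (4 * π)) * (dot x F / (eunorm x) ^ 3)

/-- The radial cubic cutoff profile: `1` for `r ≤ a`, a cubic polynomial on `[a, b]`,
and `0` for `r ≥ b`. -/
def cutoff (a b r : ℝ) : ℝ :=
  if r ≤ a then 1
  else if r ≤ b then
    (2 * r ^ 3 - 3 * (a + b) * r ^ 2 + 6 * a * b * r + b ^ 2 * (b - 3 * a)) / (b - a) ^ 3
  else 0

/-!
On the annulus the cutoff is the cubic `ψ(r)`, `r = |x|`, so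
`χ̃ u_j = (F_j ψ r⁻¹ + ψ r⁻³ (x·F) x_j) / (8πμ)` and `χ̃ p = ψ r⁻³ (x·F) / (4π)`.
By the product rule `Δ(fg) = g Δf + 2 ∇f·∇g + f Δg`, fields of the form `φ(r)` and
`φ(r) (x·F) x_j` in dimension `d` have Laplacians `φ'' + (d-1) φ'/r` and
`(φ'' + (d+3) φ'/r) (x·F) x_j + 2 φ F_j`. With `φ = ψ r⁻¹` and `φ = ψ r⁻³` every term in which
`ψ` itself is not differentiated cancels (the Stokeslet solves the Stokes equations away from
`0`), which leaves `(-ψ'' F_j + (2ψ'/r - ψ'') (x·F) x_j / r²) / (8πr)` for any `C²` profile `ψ`.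
For the cubic, `ψ' = 6(r-a)(r-b)/(b-a)³` and `ψ'' = 6(2r-a-b)/(b-a)³`.
-/

open Filter Topology

section PartialDerivative

variable {d : ℕ} {f g : (Fin d → ℝ) → ℝ} {x : Fin d → ℝ}

theorem pd_congr_of_eventuallyEq (i : Fin d) (h : f =ᶠ[𝓝 x] g) : pd i f x = pd i g x := by
  rw [pd, pd, h.fderiv_eq]

theorem pd_const (i : Fin d) (c : ℝ) (x : Fin d → ℝ) : pd i (fun _ => c) x = 0 := by
  simp [pd]

theorem pd_add (i : Fin d) (hf : DifferentiableAt ℝ f x) (hg : DifferentiableAt ℝ g x) :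
    pd i (fun y => f y + g y) x = pd i f x + pd i g x := by
  simp [pd, fderiv_fun_add hf hg]

theorem pd_mul (i : Fin d) (hf : DifferentiableAt ℝ f x) (hg : DifferentiableAt ℝ g x) :
    pd i (fun y => f y * g y) x = pd i f x * g x + f x * pd i g x := by
  simp only [pd, fderiv_fun_mul hf hg, add_apply, smul_apply, smul_eq_mul]
  ring

-- No differentiability is needed: for `c ≠ 0`, `c • f` is differentiable exactly when `f` is.
theorem pd_const_mul (i : Fin d) (c : ℝ) (f : (Fin d → ℝ) → ℝ) (x : Fin d → ℝ) :
    pd i (fun y => c * f y) x = c * pd i f x := by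
  have h := congrFun (fderiv_const_smul_field (𝕜 := ℝ) (f := f) c) x
  simp [pd, ← smul_eq_mul, ← Pi.smul_def, h]

theorem pd_sum {ι : Type*} (s : Finset ι) (i : Fin d) {f : ι → (Fin d → ℝ) → ℝ}
    (hf : ∀ k ∈ s, DifferentiableAt ℝ (f k) x) :
    pd i (fun y => ∑ k ∈ s, f k y) x = ∑ k ∈ s, pd i (f k) x := by
  simp [pd, fderiv_fun_sum hf]

theorem pd_comp {φ : ℝ → ℝ} (i : Fin d) (hφ : DifferentiableAt ℝ φ (g x))
    (hg : DifferentiableAt ℝ g x) : pd i (fun y => φ (g y)) x = deriv φ (g x) * pd i g x := by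
  have h := (hφ.hasDerivAt.comp_hasFDerivAt x hg.hasFDerivAt).fderiv
  simp only [Function.comp_def] at h
  simp [pd, h]

theorem pd_clm (i : Fin d) (L : (Fin d → ℝ) →L[ℝ] ℝ) : pd i L x = L (Pi.single i 1) := by
  simp [pd]

theorem pd_apply (i j : Fin d) : pd i (fun y => y j) x = if i = j then 1 else 0 := by
  rw [show (fun y : Fin d → ℝ => y j) = ContinuousLinearMap.proj (R := ℝ) j from rfl, pd_clm]
  simp [Pi.single_apply, eq_comm]

theorem pd_dot (i : Fin d) (F : Fin d → ℝ) : pd i (fun y => dot y F) x = F i := by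
  have h : (fun y => dot y F) = ⇑(∑ k, F k • ContinuousLinearMap.proj (R := ℝ) k) := by
    ext y
    simp [dot, mul_comm]
  rw [h, pd_clm]
  simp [Pi.single_apply]

theorem differentiableAt_pd (i : Fin d) (hf : ContDiffAt ℝ 2 f x) :
    DifferentiableAt ℝ (pd i f) x :=
  ((hf.fderiv_right (m := 1) (by norm_num)).clm_apply contDiffAt_const).differentiableAt
    (by norm_num)

theorem eventually_differentiableAt (hf : ContDiffAt ℝ 2 f x) :
    ∀ᶠ y in 𝓝 x, DifferentiableAt ℝ f y :=
  (hf.eventually (by simp)).mono fun _ hy => hy.differentiableAt (by norm_num)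

end PartialDerivative

section Laplacian

variable {d : ℕ} {f g : (Fin d → ℝ) → ℝ} {x : Fin d → ℝ}

theorem lap_congr_of_eventuallyEq (h : f =ᶠ[𝓝 x] g) : lap f x = lap g x := by
  refine Finset.sum_congr rfl fun i _ => pd_congr_of_eventuallyEq i ?_
  exact h.eventuallyEq_nhds.mono fun y hy => pd_congr_of_eventuallyEq i hy

theorem lap_const_mul (c : ℝ) (f : (Fin d → ℝ) → ℝ) (x : Fin d → ℝ) :
    lap (fun y => c * f y) x = c * lap f x := by
  simp only [lap, pd_const_mul, Finset.mul_sum]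

theorem lap_add (hf : ContDiffAt ℝ 2 f x) (hg : ContDiffAt ℝ 2 g x) :
    lap (fun y => f y + g y) x = lap f x + lap g x := by
  rw [lap, lap, lap, ← Finset.sum_add_distrib]
  refine Finset.sum_congr rfl fun i _ => ?_
  have h : pd i (fun y => f y + g y) =ᶠ[𝓝 x] fun y => pd i f y + pd i g y :=
    (eventually_differentiableAt hf).and (eventually_differentiableAt hg) |>.mono
      fun y hy => pd_add i hy.1 hy.2
  rw [pd_congr_of_eventuallyEq i h, pd_add i (differentiableAt_pd i hf) (differentiableAt_pd i hg)]

theorem lap_mul (hf : ContDiffAt ℝ 2 f x) (hg : ContDiffAt ℝ 2 g x) :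
    lap (fun y => f y * g y) x =
      lap f x * g x + 2 * ∑ i, pd i f x * pd i g x + f x * lap g x := by
  simp only [lap, Finset.sum_mul, Finset.mul_sum, ← Finset.sum_add_distrib]
  refine Finset.sum_congr rfl fun i _ => ?_
  have h : pd i (fun y => f y * g y) =ᶠ[𝓝 x] fun y => pd i f y * g y + f y * pd i g y :=
    (eventually_differentiableAt hf).and (eventually_differentiableAt hg) |>.mono
      fun y hy => pd_mul i hy.1 hy.2
  have hf' := differentiableAt_pd i hf
  have hg' := differentiableAt_pd i hg
  have hf1 := hf.differentiableAt (by norm_num)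
  have hg1 := hg.differentiableAt (by norm_num)
  rw [pd_congr_of_eventuallyEq i h, pd_add i (hf'.fun_mul hg1) (hf1.fun_mul hg'),
    pd_mul i hf' hg1, pd_mul i hf1 hg']
  ring

end Laplacian

section Radial

variable {d : ℕ} {x : Fin d → ℝ} {φ : ℝ → ℝ}

theorem eunorm_sq (x : Fin d → ℝ) : eunorm x ^ 2 = ∑ i, x i ^ 2 :=
  Real.sq_sqrt (Finset.sum_nonneg fun i _ => sq_nonneg (x i))

theorem sum_sq_ne_zero_of_eunorm_ne_zero (hx : eunorm x ≠ 0) : ∑ i, x i ^ 2 ≠ 0 :=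
  fun h => hx (by rw [eunorm, h, Real.sqrt_zero])

theorem continuous_eunorm : Continuous (eunorm : (Fin d → ℝ) → ℝ) := by
  unfold eunorm
  fun_prop

theorem contDiffAt_eunorm {n : WithTop ℕ∞} (hx : eunorm x ≠ 0) : ContDiffAt ℝ n eunorm x :=
  ContDiffAt.sqrt (by fun_prop) (sum_sq_ne_zero_of_eunorm_ne_zero hx)

theorem differentiableAt_eunorm (hx : eunorm x ≠ 0) : DifferentiableAt ℝ eunorm x :=
  (contDiffAt_eunorm (n := 1) hx).differentiableAt (by norm_num)

theorem pd_eunorm (i : Fin d) (hx : eunorm x ≠ 0) : pd i eunorm x = x i / eunorm x := by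
  have hsqrt := Real.hasDerivAt_sqrt (sum_sq_ne_zero_of_eunorm_ne_zero hx)
  have hsq (k : Fin d) : pd i (fun y => y k ^ 2) x = 2 * x k * if i = k then 1 else 0 := by
    rw [pd_comp i (differentiableAt_pow 2) (by fun_prop), pd_apply]
    simp
  change pd i (fun y => √(∑ k, y k ^ 2)) x = x i / √(∑ k, x k ^ 2)
  rw [pd_comp (g := fun y => ∑ k, y k ^ 2) i hsqrt.differentiableAt (by fun_prop), hsqrt.deriv,
    pd_sum _ i fun k _ => by fun_prop]
  simp only [hsq, mul_ite, mul_one, mul_zero, Finset.sum_ite_eq, Finset.mem_univ, if_true]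
  field_simp

theorem pd_comp_eunorm (i : Fin d) (hφ : DifferentiableAt ℝ φ (eunorm x))
    (hx : eunorm x ≠ 0) :
    pd i (fun y => φ (eunorm y)) x = deriv φ (eunorm x) * (x i / eunorm x) := by
  rw [pd_comp i hφ (differentiableAt_eunorm hx), pd_eunorm i hx]

theorem differentiableAt_deriv_of_contDiffAt {s : ℝ} (hφ : ContDiffAt ℝ 2 φ s) :
    DifferentiableAt ℝ (deriv φ) s :=
  ((hφ.fderiv_right (m := 1) (by norm_num)).clm_apply contDiffAt_const).differentiableAt
    (by norm_num)

theorem pd_pd_comp_eunorm (i : Fin d) (hφ : ContDiffAt ℝ 2 φ (eunorm x)) (hx : eunorm x ≠ 0) :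
    pd i (fun y => pd i (fun y => φ (eunorm y)) y) x =
      (deriv (deriv φ) (eunorm x) / eunorm x ^ 2 - deriv φ (eunorm x) / eunorm x ^ 3) * x i ^ 2
        + deriv φ (eunorm x) / eunorm x := by
  have hr := differentiableAt_eunorm hx
  have hφ' := differentiableAt_deriv_of_contDiffAt hφ
  have h : pd i (fun y => φ (eunorm y)) =ᶠ[𝓝 x]
      fun y => deriv φ (eunorm y) * (y i * (eunorm y)⁻¹) := by
    filter_upwards [continuous_eunorm.continuousAt.eventually (hφ.eventually (by simp)),
      continuous_eunorm.continuousAt.eventually_ne hx] with y hφy hy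
    rw [pd_comp_eunorm i (hφy.differentiableAt (by simp)) hy, div_eq_mul_inv]
  have hinv : pd i (fun y => (eunorm y)⁻¹) x = -(eunorm x ^ 2)⁻¹ * (x i / eunorm x) := by
    rw [pd_comp_eunorm i (differentiableAt_inv hx) hx, deriv_inv]
  rw [pd_congr_of_eventuallyEq i h,
    pd_mul (f := fun y => deriv φ (eunorm y)) (g := fun y => y i * (eunorm y)⁻¹) i
      (hφ'.comp x hr) ((differentiableAt_apply i x).mul (hr.inv hx)),
    pd_comp_eunorm i hφ' hx,
    pd_mul (f := fun y => y i) (g := fun y => (eunorm y)⁻¹) i (differentiableAt_apply i x)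
      (hr.inv hx),
    hinv, pd_apply, if_pos rfl]
  field_simp
  ring

theorem lap_comp_eunorm (hφ : ContDiffAt ℝ 2 φ (eunorm x)) (hx : eunorm x ≠ 0) :
    lap (fun y => φ (eunorm y)) x =
      deriv (deriv φ) (eunorm x) + (d - 1) / eunorm x * deriv φ (eunorm x) := by
  simp only [lap, pd_pd_comp_eunorm _ hφ hx, Finset.sum_add_distrib, ← Finset.mul_sum,
    ← eunorm_sq, Finset.sum_const, Finset.card_univ, Fintype.card_fin, nsmul_eq_mul]
  field_simp
  ring

theorem contDiff_dot_mul_apply {n : WithTop ℕ∞} (F : Fin d → ℝ) (j : Fin d) :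
    ContDiff ℝ n fun y => dot y F * y j := by
  unfold dot
  fun_prop

theorem pd_dot_mul_apply (i j : Fin d) (F : Fin d → ℝ) :
    pd i (fun y => dot y F * y j) x = F i * x j + dot x F * if i = j then 1 else 0 := by
  rw [pd_mul (f := fun y => dot y F) i (by unfold dot; fun_prop) (differentiableAt_apply j x),
    pd_dot, pd_apply]

theorem lap_dot_mul_apply (F : Fin d → ℝ) (j : Fin d) :
    lap (fun y => dot y F * y j) x = 2 * F j := by
  have hdot : lap (fun y => dot y F) x = 0 := by
    simp only [lap, pd_dot, pd_const, Finset.sum_const_zero]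
  have happ : lap (fun y => y j) x = 0 := by
    simp only [lap, pd_apply, pd_const, Finset.sum_const_zero]
  rw [lap_mul (f := fun y => dot y F) (by unfold dot; fun_prop) (by fun_prop), hdot, happ]
  simp [pd_dot, pd_apply]

theorem lap_comp_eunorm_mul_dot_mul_apply (hφ : ContDiffAt ℝ 2 φ (eunorm x))
    (hx : eunorm x ≠ 0) (F : Fin d → ℝ) (j : Fin d) :
    lap (fun y => φ (eunorm y) * (dot y F * y j)) x =
      (deriv (deriv φ) (eunorm x) + (d + 3) / eunorm x * deriv φ (eunorm x)) * (dot x F * x j)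
        + 2 * φ (eunorm x) * F j := by
  rw [lap_mul (f := fun y => φ (eunorm y)) (hφ.comp x (contDiffAt_eunorm hx))
      (contDiff_dot_mul_apply F j).contDiffAt, lap_comp_eunorm hφ hx, lap_dot_mul_apply]
  simp only [pd_comp_eunorm _ (hφ.differentiableAt (by norm_num)) hx, pd_dot_mul_apply, mul_add,
    mul_ite, mul_one, mul_zero, Finset.sum_add_distrib, Finset.sum_ite_eq', Finset.mem_univ,
    if_true]
  have hsum : ∑ i, deriv φ (eunorm x) * (x i / eunorm x) * (F i * x j) =
      deriv φ (eunorm x) / eunorm x * x j * dot x F := by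
    rw [dot, Finset.mul_sum]
    exact Finset.sum_congr rfl fun i _ => by ring
  rw [hsum]
  field_simp
  ring

end Radial

section Profile

variable {ψ : ℝ → ℝ} {s : ℝ}

theorem contDiffAt_mul_zpow (hψ : ContDiffAt ℝ 2 ψ s) (k : ℤ) (hs : s ≠ 0) :
    ContDiffAt ℝ 2 (fun t => ψ t * t ^ k) s :=
  hψ.mul (analyticAt_id.zpow hs).contDiffAt

theorem deriv_mul_zpow (hψ : DifferentiableAt ℝ ψ s) (k : ℤ) (hs : s ≠ 0) :
    deriv (fun t => ψ t * t ^ k) s = deriv ψ s * s ^ k + k * ψ s * s ^ (k - 1) := by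
  rw [deriv_fun_mul hψ (differentiableAt_zpow.mpr (Or.inl hs)), deriv_zpow]
  ring

theorem deriv_deriv_mul_zpow (hψ : ContDiffAt ℝ 2 ψ s) (k : ℤ) (hs : s ≠ 0) :
    deriv (deriv fun t => ψ t * t ^ k) s = deriv (deriv ψ) s * s ^ k
      + 2 * k * deriv ψ s * s ^ (k - 1) + k * (k - 1) * ψ s * s ^ (k - 2) := by
  have h : deriv (fun t => ψ t * t ^ k) =ᶠ[𝓝 s]
      fun t => deriv ψ t * t ^ k + k * ψ t * t ^ (k - 1) := by
    filter_upwards [hψ.eventually (by simp), eventually_ne_nhds hs] with t hψt ht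
    exact deriv_mul_zpow (hψt.differentiableAt (by norm_num)) k ht
  have hψ1 := hψ.differentiableAt (by norm_num)
  have hψ2 := differentiableAt_deriv_of_contDiffAt hψ
  have hpow := (differentiableAt_zpow (m := k)).mpr (Or.inl hs)
  have hpow1 := (differentiableAt_zpow (m := k - 1)).mpr (Or.inl hs)
  rw [h.deriv_eq, deriv_fun_add (hψ2.fun_mul hpow) ((hψ1.const_mul _).fun_mul hpow1),
    deriv_mul_zpow hψ2 k hs, deriv_fun_mul (hψ1.const_mul _) hpow1, deriv_const_mul _ hψ1,
    deriv_zpow, show k - 1 - 1 = k - 2 by ring]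
  push_cast
  ring

end Profile

section Stokeslet

theorem comp_eunorm_mul_udelta3 (ψ : ℝ → ℝ) (μ : ℝ) (F y : Fin 3 → ℝ) (j : Fin 3) :
    ψ (eunorm y) * udelta3 μ F y j = 1 / (8 * π * μ) *
      (F j * (ψ (eunorm y) * eunorm y ^ (-1 : ℤ))
        + ψ (eunorm y) * eunorm y ^ (-3 : ℤ) * (dot y F * y j)) := by
  simp only [udelta3, zpow_neg, zpow_ofNat]
  ring

theorem comp_eunorm_mul_pdelta3 (ψ : ℝ → ℝ) (F y : Fin 3 → ℝ) :
    ψ (eunorm y) * pdelta3 F y =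
      1 / (4 * π) * (ψ (eunorm y) * eunorm y ^ (-3 : ℤ) * dot y F) := by
  simp only [pdelta3, zpow_neg, zpow_ofNat]
  ring

theorem stokes_comp_eunorm_mul_stokeslet3d {μ : ℝ} (hμ : μ ≠ 0) (F : Fin 3 → ℝ)
    {ψ : ℝ → ℝ} {x : Fin 3 → ℝ} (hψ : ContDiffAt ℝ 2 ψ (eunorm x)) (hx : eunorm x ≠ 0) (j : Fin 3) :
    -μ * lap (fun y => ψ (eunorm y) * udelta3 μ F y j) x +
        pd j (fun y => ψ (eunorm y) * pdelta3 F y) x =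
      1 / (8 * π * eunorm x) * (-deriv (deriv ψ) (eunorm x) * F j
        + (2 * deriv ψ (eunorm x) / eunorm x - deriv (deriv ψ) (eunorm x))
          * (dot x F / eunorm x ^ 2) * x j) := by
  have hα := contDiffAt_mul_zpow hψ (-1) hx
  have hβ := contDiffAt_mul_zpow hψ (-3) hx
  have hr := contDiffAt_eunorm (n := 2) hx
  simp only [comp_eunorm_mul_udelta3, comp_eunorm_mul_pdelta3]
  rw [lap_const_mul, lap_add (f := fun y => F j * (ψ (eunorm y) * eunorm y ^ (-1 : ℤ)))
      (g := fun y => ψ (eunorm y) * eunorm y ^ (-3 : ℤ) * (dot y F * y j))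
      (contDiffAt_const.mul (hα.comp x hr))
      ((hβ.comp x hr).mul (contDiff_dot_mul_apply F j).contDiffAt),
    lap_const_mul, lap_comp_eunorm hα hx, lap_comp_eunorm_mul_dot_mul_apply hβ hx, pd_const_mul,
    pd_mul (f := fun y => ψ (eunorm y) * eunorm y ^ (-3 : ℤ)) j
      ((hβ.comp x hr).differentiableAt (by norm_num)) (by unfold dot; fun_prop),
    pd_comp_eunorm j (hβ.differentiableAt (by norm_num)) hx, pd_dot,
    deriv_mul_zpow (hψ.differentiableAt (by norm_num)) _ hx,
    deriv_mul_zpow (hψ.differentiableAt (by norm_num)) _ hx,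
    deriv_deriv_mul_zpow hψ _ hx, deriv_deriv_mul_zpow hψ _ hx]
  norm_num [zpow_neg, zpow_ofNat]
  field_simp
  ring

end Stokeslet

section Cutoff

def cutoffCubic (a b r : ℝ) : ℝ :=
  (2 * r ^ 3 - 3 * (a + b) * r ^ 2 + 6 * a * b * r + b ^ 2 * (b - 3 * a)) / (b - a) ^ 3

variable {a b : ℝ}

theorem cutoff_eq_cutoffCubic {r : ℝ} (ha : a < r) (hb : r ≤ b) :
    cutoff a b r = cutoffCubic a b r := by
  rw [cutoff, if_neg ha.not_ge, if_pos hb, cutoffCubic]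

theorem contDiff_cutoffCubic {n : WithTop ℕ∞} : ContDiff ℝ n (cutoffCubic a b) := by
  unfold cutoffCubic
  fun_prop

theorem hasDerivAt_cutoffCubic (r : ℝ) :
    HasDerivAt (cutoffCubic a b) (6 * (r - a) * (r - b) / (b - a) ^ 3) r := by
  have h := ((((hasDerivAt_pow 3 r).const_mul 2).sub ((hasDerivAt_pow 2 r).const_mul
    (3 * (a + b)))).add ((hasDerivAt_id r).const_mul (6 * a * b))).add_const
    (b ^ 2 * (b - 3 * a)) |>.div_const ((b - a) ^ 3)
  exact h.congr_deriv (by push_cast; ring)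

theorem deriv_cutoffCubic :
    deriv (cutoffCubic a b) = fun r => 6 * (r - a) * (r - b) / (b - a) ^ 3 :=
  funext fun r => (hasDerivAt_cutoffCubic r).deriv

theorem deriv_deriv_cutoffCubic (r : ℝ) :
    deriv (deriv (cutoffCubic a b)) r = 6 * (2 * r - a - b) / (b - a) ^ 3 := by
  have h := ((((hasDerivAt_id r).sub_const a).const_mul 6).mul
    ((hasDerivAt_id r).sub_const b)).div_const ((b - a) ^ 3)
  rw [deriv_cutoffCubic]
  exact h.deriv.trans (by simp only [mul_one, id_eq]; ring)

end Cutoff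

theorem stokes_truncated_stokeslet3d_general (μ : ℝ) (hμ : 0 < μ) (F : Fin 3 → ℝ)
    (a b : ℝ) (ha : 0 < a)
    (x : Fin 3 → ℝ) (hxa : a < eunorm x) (hxb : eunorm x < b) :
    ∀ j : Fin 3,
      -μ * lap (fun y => cutoff a b (eunorm y) * udelta3 μ F y j) x +
        pd j (fun y => cutoff a b (eunorm y) * pdelta3 F y) x =
      (3 / (4 * π * (b - a) ^ 3 * (eunorm x) ^ 2)) *
        (((a + b) * eunorm x - 2 * (eunorm x) ^ 2) * F j
          + (2 * a * b - (a + b) * eunorm x) * (dot x F / (eunorm x) ^ 2) * x j) := by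
  intro j
  have hr : eunorm x ≠ 0 := (ha.trans hxa).ne'
  have hba : b - a ≠ 0 := sub_ne_zero.mpr (hxa.trans hxb).ne'
  have hχ : ∀ᶠ y in 𝓝 x, cutoff a b (eunorm y) = cutoffCubic a b (eunorm y) :=
    (continuous_eunorm.continuousAt.eventually (Ioo_mem_nhds hxa hxb)).mono
      fun y hy => cutoff_eq_cutoffCubic hy.1 hy.2.le
  rw [lap_congr_of_eventuallyEq (hχ.mono fun y hy => by rw [hy]),
    pd_congr_of_eventuallyEq j (hχ.mono fun y hy => by rw [hy]),
    stokes_comp_eunorm_mul_stokeslet3d hμ.ne' F contDiff_cutoffCubic.contDiffAt hr j,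
    deriv_deriv_cutoffCubic, deriv_cutoffCubic]
  field_simp
  ring

/-- The Stokes operator applied to the truncated 3D Stokeslet `(χ̃ u_δ, χ̃ p_δ)` on the
annulus `a < |x| < b` gives the explicit function `g`. -/
theorem stokes_truncated_stokeslet3d (μ : ℝ) (hμ : 0 < μ) (F : Fin 3 → ℝ)
    (a b : ℝ) (ha : 0 < a) (hab : a < b)
    (x : Fin 3 → ℝ) (hxa : a < eunorm x) (hxb : eunorm x < b) :
    ∀ j : Fin 3,
      -μ * lap (fun y => cutoff a b (eunorm y) * udelta3 μ F y j) x +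
        pd j (fun y => cutoff a b (eunorm y) * pdelta3 F y) x =
      (3 / (4 * π * (b - a) ^ 3 * (eunorm x) ^ 2)) *
        (((a + b) * eunorm x - 2 * (eunorm x) ^ 2) * F j
          + (2 * a * b - (a + b) * eunorm x) * (dot x F / (eunorm x) ^ 2) * x j) :=
  stokes_truncated_stokeslet3d_general μ hμ F a b ha x hxa hxb
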